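/- arXiv:2308.00463 — 3 statements merged into one kernel-verified Lean document; each statement's English description precedes it below -/
import Mathlib

section
/- Variance bound for the Q-learning noise term (condition (4) of the stochastic approximation lemma): let Q* be the unique fixed point of the Bellman optimality operator H. There exists a constant C > 0 such that for every Q : S → A → ℝ and every (s,a) ∈ S × A, the variance, with respect to the next-state distribution P s a, of the random variable s' ↦ u(s,a) + γ · max_{a' ∈ A} Q(s',a') − Q*(s,a) is at most C · (1 + ‖Q − Q*‖∞)². Here the variance of a function f : S → ℝ with respect to P s a is ∑_{s'} (P s a)(s') · f(s')² − (∑_{s'} (P s a)(s') · f(s'))². -/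
/-- Variance bound for the Q-learning noise term: there is a constant `C > 0` such
that for every `Q` and every `(s,a)`, the variance (w.r.t. the next-state
distribution `P s a`) of `s' ↦ u(s,a) + γ·max_{a'} Q(s',a') − Q*(s,a)` is at most
`C·(1 + ‖Q − Q*‖∞)²`. -/
theorem qlearning_noise_variance_bound
    (S A : Type*) [Fintype S] [Fintype A] [Nonempty S] [Nonempty A]
    (P : S → A → PMF S) (u : S → A → ℝ) (γ : ℝ) (hγ0 : 0 ≤ γ) (hγ1 : γ < 1)
    (H : (S → A → ℝ) → (S → A → ℝ))
    (hH : ∀ q s a, H q s a = u s a + γ * ∑ s', (P s a s').toReal * ⨆ a', q s' a')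
    (Qstar : S → A → ℝ) (hQstar : H Qstar = Qstar) :
    ∃ C > (0 : ℝ), ∀ Q : S → A → ℝ, ∀ s a,
      (∑ s', (P s a s').toReal * (u s a + γ * (⨆ a', Q s' a') - Qstar s a) ^ 2) -
        (∑ s', (P s a s').toReal * (u s a + γ * (⨆ a', Q s' a') - Qstar s a)) ^ 2 ≤
      C * (1 + ⨆ p : S × A, |Q p.1 p.2 - Qstar p.1 p.2|) ^ 2 := by
  classical
  set M₁ : ℝ := ⨆ p : S × A, |u p.1 p.2| with hM₁
  set M₂ : ℝ := ⨆ p : S × A, |Qstar p.1 p.2| with hM₂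
  have hbdd : ∀ f : S × A → ℝ, BddAbove (Set.range f) := fun f =>
    Set.Finite.bddAbove (Set.finite_range f)
  have hM₁le : ∀ s a, |u s a| ≤ M₁ := fun s a =>
    le_ciSup (f := fun p : S × A => |u p.1 p.2|) (hbdd _) (s, a)
  have hM₂le : ∀ s a, |Qstar s a| ≤ M₂ := fun s a =>
    le_ciSup (f := fun p : S × A => |Qstar p.1 p.2|) (hbdd _) (s, a)
  obtain ⟨s₀⟩ := ‹Nonempty S›
  obtain ⟨a₀⟩ := ‹Nonempty A›
  have hM₁0 : 0 ≤ M₁ := le_trans (abs_nonneg _) (hM₁le s₀ a₀)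
  have hM₂0 : 0 ≤ M₂ := le_trans (abs_nonneg _) (hM₂le s₀ a₀)
  set K : ℝ := M₁ + 2 * M₂ + 1 with hK
  have hK1 : 1 ≤ K := by nlinarith
  have hK0 : 0 < K := lt_of_lt_of_le one_pos hK1
  refine ⟨K ^ 2, by positivity, fun Q s a => ?_⟩
  set D : ℝ := ⨆ p : S × A, |Q p.1 p.2 - Qstar p.1 p.2| with hD
  have hDle : ∀ s' a', |Q s' a' - Qstar s' a'| ≤ D := fun s' a' =>
    le_ciSup (f := fun p : S × A => |Q p.1 p.2 - Qstar p.1 p.2|) (hbdd _) (s', a')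
  have hD0 : 0 ≤ D := le_trans (abs_nonneg _) (hDle s₀ a₀)
  -- the probabilities
  have hp0 : ∀ s', 0 ≤ (P s a s').toReal := fun s' => ENNReal.toReal_nonneg
  have hsum : ∑ s', (P s a s').toReal = 1 := by
    have h1 : ∑' s', (P s a) s' = 1 := (P s a).tsum_coe
    rw [tsum_fintype] at h1
    rw [← ENNReal.toReal_sum (fun s' _ => (P s a).apply_ne_top s'), h1,
      ENNReal.toReal_one]
  -- bound on the sup of Q
  have hsupQ : ∀ s', |⨆ a', Q s' a'| ≤ M₂ + D := by
    intro s'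
    rw [abs_le]
    constructor
    · have h1 : Qstar s' a₀ - D ≤ Q s' a₀ := by
        have := hDle s' a₀
        have := abs_le.1 (hDle s' a₀)
        linarith [this.1]
      have h2 : Q s' a₀ ≤ ⨆ a', Q s' a' := le_ciSup
        (Set.Finite.bddAbove (Set.finite_range _)) a₀
      have h3 : -M₂ ≤ Qstar s' a₀ := by
        have := hM₂le s' a₀; have := abs_le.1 (hM₂le s' a₀); linarith [this.1]
      linarith
    · refine ciSup_le fun a' => ?_
      have h1 := abs_le.1 (hDle s' a')
      have h2 := abs_le.1 (hM₂le s' a')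
      linarith [h1.2, h2.2]
  -- pointwise bound on |f|
  have hf : ∀ s', |u s a + γ * (⨆ a', Q s' a') - Qstar s a| ≤ K * (1 + D) := by
    intro s'
    have h1 : |u s a + γ * (⨆ a', Q s' a') - Qstar s a| ≤
        |u s a| + γ * |⨆ a', Q s' a'| + |Qstar s a| := by
      have := abs_add_le (u s a + γ * (⨆ a', Q s' a')) (-Qstar s a)
      have h2 := abs_add_le (u s a) (γ * (⨆ a', Q s' a'))
      rw [abs_mul, abs_of_nonneg hγ0] at h2
      simp only [abs_neg] at this
      calc |u s a + γ * (⨆ a', Q s' a') - Qstar s a|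
          = |u s a + γ * (⨆ a', Q s' a') + -Qstar s a| := by ring_nf
        _ ≤ |u s a + γ * (⨆ a', Q s' a')| + |Qstar s a| := this
        _ ≤ |u s a| + γ * |⨆ a', Q s' a'| + |Qstar s a| := by linarith
    have h3 := hsupQ s'
    have h4 : γ * |⨆ a', Q s' a'| ≤ M₂ + D := by
      have : γ * |⨆ a', Q s' a'| ≤ 1 * |⨆ a', Q s' a'| :=
        mul_le_mul_of_nonneg_right (le_of_lt hγ1) (abs_nonneg _)
      linarith
    have h5 := hM₁le s a
    have h6 := hM₂le s a
    have : K * (1 + D) = M₁ + 2 * M₂ + 1 + (M₁ + 2 * M₂ + 1) * D := by ring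
    nlinarith
  -- variance ≤ second moment ≤ (K(1+D))²
  have hmean_sq : 0 ≤ (∑ s', (P s a s').toReal *
      (u s a + γ * (⨆ a', Q s' a') - Qstar s a)) ^ 2 := sq_nonneg _
  have hsecond : ∑ s', (P s a s').toReal *
      (u s a + γ * (⨆ a', Q s' a') - Qstar s a) ^ 2 ≤ (K * (1 + D)) ^ 2 := by
    calc ∑ s', (P s a s').toReal * (u s a + γ * (⨆ a', Q s' a') - Qstar s a) ^ 2
        ≤ ∑ s', (P s a s').toReal * (K * (1 + D)) ^ 2 := by
          refine Finset.sum_le_sum fun s' _ => ?_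
          refine mul_le_mul_of_nonneg_left ?_ (hp0 s')
          have := hf s'
          have h := sq_abs (u s a + γ * (⨆ a', Q s' a') - Qstar s a)
          nlinarith [abs_nonneg (u s a + γ * (⨆ a', Q s' a') - Qstar s a)]
      _ = (K * (1 + D)) ^ 2 := by rw [← Finset.sum_mul, hsum, one_mul]
  have : (K * (1 + D)) ^ 2 = K ^ 2 * (1 + D) ^ 2 := by ring
  linarith
end

section
/- Expected contraction of one Q-learning update: let Q* be the unique fixed point of the Bellman optimality operator H, let α ∈ (0,1], and let Q : S → A → ℝ. For (s,a) ∈ S × A define the expected updated value Q'(s,a) = (1−α) · Q(s,a) + α · ∑_{s'} (P s a)(s') · (u(s,a) + γ · max_{a' ∈ A} Q(s',a')). Then for every (s,a) ∈ S × A, |Q'(s,a) − Q*(s,a)| ≤ (1 − α·(1−γ)) · ‖Q − Q*‖∞. -/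
/-- Expected contraction of one Q-learning update: for the expected updated value
`Q'(s,a) = (1−α)·Q(s,a) + α·E_{s'}[u(s,a) + γ·max_{a'} Q(s',a')]`, we have
`|Q'(s,a) − Q*(s,a)| ≤ (1 − α·(1−γ))·‖Q − Q*‖∞`. -/
theorem qlearning_expected_update_contraction
    (S A : Type*) [Fintype S] [Fintype A] [Nonempty S] [Nonempty A]
    (P : S → A → PMF S) (u : S → A → ℝ) (γ : ℝ) (hγ0 : 0 ≤ γ) (hγ1 : γ < 1)
    (H : (S → A → ℝ) → (S → A → ℝ))
    (hH : ∀ q s a, H q s a = u s a + γ * ∑ s', (P s a s').toReal * ⨆ a', q s' a')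
    (Qstar : S → A → ℝ) (hQstar : H Qstar = Qstar)
    (α : ℝ) (hα : α ∈ Set.Ioc (0 : ℝ) 1)
    (Q Q' : S → A → ℝ)
    (hQ' : ∀ s a, Q' s a = (1 - α) * Q s a +
      α * ∑ s', (P s a s').toReal * (u s a + γ * ⨆ a', Q s' a')) :
    ∀ s a, |Q' s a - Qstar s a| ≤
      (1 - α * (1 - γ)) * ⨆ p : S × A, |Q p.1 p.2 - Qstar p.1 p.2| := by

  obtain ⟨hα0, hα1⟩ := hα
  intro s a
  set M := ⨆ p : S × A, |Q p.1 p.2 - Qstar p.1 p.2| with hMdef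
  have hbdd : BddAbove (Set.range fun p : S × A => |Q p.1 p.2 - Qstar p.1 p.2|) :=
    Set.Finite.bddAbove (Set.finite_range _)
  have hle : ∀ s' a', |Q s' a' - Qstar s' a'| ≤ M := fun s' a' =>
    le_ciSup hbdd (s', a')
  have hM0 : 0 ≤ M := le_trans (abs_nonneg _) (hle (Classical.arbitrary S) (Classical.arbitrary A))
  -- sup bound
  have hsup : ∀ s', |(⨆ a', Q s' a') - ⨆ a', Qstar s' a'| ≤ M := by
    intro s'
    have hb1 : BddAbove (Set.range fun a' => Q s' a') := Set.Finite.bddAbove (Set.finite_range _)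
    have hb2 : BddAbove (Set.range fun a' => Qstar s' a') := Set.Finite.bddAbove (Set.finite_range _)
    rw [abs_sub_le_iff]
    constructor
    · rw [sub_le_iff_le_add]
      refine ciSup_le fun a' => ?_
      have h1 : Q s' a' - Qstar s' a' ≤ M := le_trans (le_abs_self _) (hle s' a')
      have h2 : Qstar s' a' ≤ ⨆ a'', Qstar s' a'' := le_ciSup hb2 a'
      linarith
    · rw [sub_le_iff_le_add]
      refine ciSup_le fun a' => ?_
      have h1 : Qstar s' a' - Q s' a' ≤ M := by
        calc Qstar s' a' - Q s' a' ≤ |Qstar s' a' - Q s' a'| := le_abs_self _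
          _ = |Q s' a' - Qstar s' a'| := abs_sub_comm _ _
          _ ≤ M := hle s' a'
      have h2 : Q s' a' ≤ ⨆ a'', Q s' a'' := le_ciSup hb1 a'
      linarith
  have hsum1 : ∑ s', (P s a s').toReal = 1 := by
    have h1 : ∑' s', (P s a) s' = 1 := (P s a).tsum_coe
    rw [tsum_fintype] at h1
    rw [← ENNReal.toReal_sum (fun s' _ => (P s a).apply_ne_top s'), h1, ENNReal.toReal_one]
  have hPnn : ∀ s', 0 ≤ (P s a s').toReal := fun s' => ENNReal.toReal_nonneg
  -- key identity
  have hQs : Qstar s a = u s a + γ * ∑ s', (P s a s').toReal * ⨆ a', Qstar s' a' := by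
    conv_lhs => rw [← hQstar]
    exact hH Qstar s a
  have hexp : ∑ s', (P s a s').toReal * (u s a + γ * ⨆ a', Q s' a')
      = u s a + γ * ∑ s', (P s a s').toReal * ⨆ a', Q s' a' := by
    rw [Finset.sum_congr rfl (fun s' _ => mul_add _ _ _), Finset.sum_add_distrib,
      ← Finset.sum_mul, hsum1, one_mul]
    congr 1
    rw [Finset.mul_sum]
    exact Finset.sum_congr rfl fun s' _ => by ring
  have hdiff : Q' s a - Qstar s a
      = (1 - α) * (Q s a - Qstar s a)
        + α * γ * ∑ s', (P s a s').toReal * ((⨆ a', Q s' a') - ⨆ a', Qstar s' a') := by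
    have hsplit : ∑ s', (P s a s').toReal * ((⨆ a', Q s' a') - ⨆ a', Qstar s' a')
        = (∑ s', (P s a s').toReal * ⨆ a', Q s' a')
          - ∑ s', (P s a s').toReal * ⨆ a', Qstar s' a' := by
      rw [← Finset.sum_sub_distrib]
      exact Finset.sum_congr rfl fun s' _ => mul_sub _ _ _
    rw [hQ', hexp, hsplit, hQs]
    ring
  have hsumbound : |∑ s', (P s a s').toReal * ((⨆ a', Q s' a') - ⨆ a', Qstar s' a')| ≤ M := by
    calc |∑ s', (P s a s').toReal * ((⨆ a', Q s' a') - ⨆ a', Qstar s' a')|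
        ≤ ∑ s', |(P s a s').toReal * ((⨆ a', Q s' a') - ⨆ a', Qstar s' a')| :=
          Finset.abs_sum_le_sum_abs _ _
      _ ≤ ∑ s', (P s a s').toReal * M := by
          refine Finset.sum_le_sum fun s' _ => ?_
          rw [abs_mul, abs_of_nonneg (hPnn s')]
          exact mul_le_mul_of_nonneg_left (hsup s') (hPnn s')
      _ = M := by rw [← Finset.sum_mul, hsum1, one_mul]
  calc |Q' s a - Qstar s a|
      ≤ (1 - α) * |Q s a - Qstar s a|
        + α * γ * |∑ s', (P s a s').toReal * ((⨆ a', Q s' a') - ⨆ a', Qstar s' a')| := by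
        rw [hdiff]
        refine le_trans (abs_add_le _ _) ?_
        rw [abs_mul, abs_mul, abs_of_nonneg (by linarith : (0:ℝ) ≤ 1 - α),
          abs_of_nonneg (by positivity : (0:ℝ) ≤ α * γ)]
    _ ≤ (1 - α) * M + α * γ * M := by
        refine add_le_add (mul_le_mul_of_nonneg_left (hle s a) (by linarith))
          (mul_le_mul_of_nonneg_left hsumbound (by positivity))
    _ = (1 - α * (1 - γ)) * M := by ring
end

section
/- Noise-free stochastic approximation convergence: let ρ ∈ (0,1), let (α_j)_{j ∈ ℕ} be a sequence in [0,1] with ∑_{j} α_j = ∞, and let (Δ_j)_{j ∈ ℕ} and (ψ_j)_{j ∈ ℕ} be sequences of real numbers satisfying Δ_{j+1} = (1 − α_j)·Δ_j + α_j·ψ_j and |ψ_j| ≤ ρ·|Δ_j| for all j. Then Δ_j → 0 as j → ∞. -/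
open Filter

/-- Noise-free stochastic approximation convergence: if
`Δ_{j+1} = (1 − α_j)·Δ_j + α_j·ψ_j` with `α_j ∈ [0,1]`, `∑_j α_j = ∞` and
`|ψ_j| ≤ ρ·|Δ_j|` for some `ρ ∈ (0,1)`, then `Δ_j → 0`. -/
theorem noise_free_stochastic_approximation
    (ρ : ℝ) (hρ : ρ ∈ Set.Ioo (0 : ℝ) 1)
    (α : ℕ → ℝ) (hα : ∀ j, α j ∈ Set.Icc (0 : ℝ) 1)
    (hαsum : Tendsto (fun n => ∑ j ∈ Finset.range n, α j) atTop atTop)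
    (Δ ψ : ℕ → ℝ)
    (hiter : ∀ j, Δ (j + 1) = (1 - α j) * Δ j + α j * ψ j)
    (hψ : ∀ j, |ψ j| ≤ ρ * |Δ j|) :
    Tendsto Δ atTop (nhds 0) := by
  obtain ⟨hρ0, hρ1⟩ := hρ
  set c : ℕ → ℝ := fun j => 1 - (1 - ρ) * α j with hc
  have hc0 : ∀ j, 0 ≤ c j := by
    intro j
    have h1 := (hα j).1
    have h2 := (hα j).2
    have : (1 - ρ) * α j ≤ 1 := by nlinarith
    simp [hc]; linarith
  have hstep : ∀ j, |Δ (j + 1)| ≤ c j * |Δ j| := by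
    intro j
    have h1 := (hα j).1
    have h2 := (hα j).2
    calc |Δ (j + 1)| = |(1 - α j) * Δ j + α j * ψ j| := by rw [hiter j]
      _ ≤ |(1 - α j) * Δ j| + |α j * ψ j| := abs_add_le _ _
      _ = (1 - α j) * |Δ j| + α j * |ψ j| := by
          rw [abs_mul, abs_mul, abs_of_nonneg (by linarith), abs_of_nonneg h1]
      _ ≤ (1 - α j) * |Δ j| + α j * (ρ * |Δ j|) := by
          have := hψ j
          nlinarith
      _ = c j * |Δ j| := by simp [hc]; ring
  have hbound : ∀ n, |Δ n| ≤ |Δ 0| * ∏ j ∈ Finset.range n, c j := by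
    intro n
    induction n with
    | zero => simp
    | succ n ih =>
      rw [Finset.prod_range_succ]
      calc |Δ (n + 1)| ≤ c n * |Δ n| := hstep n
        _ ≤ c n * (|Δ 0| * ∏ j ∈ Finset.range n, c j) := by
            exact mul_le_mul_of_nonneg_left ih (hc0 n)
        _ = |Δ 0| * ((∏ j ∈ Finset.range n, c j) * c n) := by ring
  have hprod : ∀ n, ∏ j ∈ Finset.range n, c j ≤
      Real.exp ((ρ - 1) * ∑ j ∈ Finset.range n, α j) := by
    intro n
    calc ∏ j ∈ Finset.range n, c j
        ≤ ∏ j ∈ Finset.range n, Real.exp ((ρ - 1) * α j) := by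
          apply Finset.prod_le_prod
          · intro i _; exact hc0 i
          · intro i _
            have := Real.add_one_le_exp ((ρ - 1) * α i)
            show 1 - (1 - ρ) * α i ≤ _
            linarith
      _ = Real.exp ((ρ - 1) * ∑ j ∈ Finset.range n, α j) := by
          rw [← Real.exp_sum, Finset.mul_sum]
  have hexp : Tendsto (fun n => Real.exp ((ρ - 1) * ∑ j ∈ Finset.range n, α j))
      atTop (nhds 0) := by
    apply Real.tendsto_exp_atBot.comp
    have h1 : Tendsto (fun n => (1 - ρ) * ∑ j ∈ Finset.range n, α j) atTop atTop :=
      hαsum.const_mul_atTop (by linarith)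
    have := tendsto_neg_atBot_iff.mpr h1
    exact this.congr (fun n => by ring)
  have habs : Tendsto (fun n => |Δ n|) atTop (nhds 0) := by
    apply squeeze_zero (fun n => abs_nonneg _) (fun n => (hbound n).trans ?_)
    · have := hexp.const_mul |Δ 0|
      simpa using this
    · exact mul_le_mul_of_nonneg_left (hprod n) (abs_nonneg _)
  exact (tendsto_zero_iff_abs_tendsto_zero Δ).mpr habs
end
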